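/- Let A and P be real d×n matrices with σ = ‖A−P‖/√n, M a real d×k matrix with columns M_1,…,M_k, α ∈ (0,1), and δ ∈ (0,1/k] with δn a positive integer. Assume Well-Separatedness with parameter α, Spectrally Bounded Perturbations (σ/√δ ≤ α³·min_ℓ|M_ℓ|/(4500·k⁹)), and Proximate Latent Points: for every ℓ ∈ [k] there exists S_ℓ ⊆ {1,…,n} with |S_ℓ| = δn such that |P_{·,j} − M_ℓ| ≤ 4σ/√δ for all j ∈ S_ℓ. Then the k-th largest singular value of P satisfies s_k(P) ≥ 995·k^{8.5}·√n·σ/α². -/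

import Mathlib

/-!
The normalized indicator vectors `u_ℓ` of the index sets `S_ℓ` are orthonormal: the sets are
disjoint because well-separated latent points lie more than `8σ/√δ` apart. On a unit vector
`∑ c_ℓ u_ℓ` of their span, `P` acts as `√(δn) ∑ c_ℓ M_ℓ` up to an error `k √(δn) · 4σ/√δ`.
Some `|c_ℓ|` is at least `1/√k`, and projecting onto the orthogonal complement of the other
columns gives `‖∑ c_ℓ M_ℓ‖ ≥ α min_ℓ |M_ℓ| / √k`. Courant–Fischer turns this into a lower bound
on `s_k(P)`, and the spectral bound on the perturbation leaves the stated constant.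
-/

noncomputable def col {d k : ℕ} (M : Matrix (Fin d) (Fin k) ℝ) (ℓ : Fin k) :
    EuclideanSpace ℝ (Fin d) := WithLp.toLp 2 (fun i => M i ℓ)

noncomputable def specNorm {d n : ℕ} (B : Matrix (Fin d) (Fin n) ℝ) : ℝ :=
  ‖LinearMap.toContinuousLinearMap (Matrix.toEuclideanLin B)‖

/-- The `t`-th largest singular value (1-indexed), via the Courant–Fischer
characterization. -/
noncomputable def singularValue {d n : ℕ} (B : Matrix (Fin d) (Fin n) ℝ) (t : ℕ) : ℝ :=
  ⨆ V : {V : Submodule ℝ (EuclideanSpace ℝ (Fin n)) // Module.finrank ℝ V = t},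
    ⨅ x : {x : EuclideanSpace ℝ (Fin n) // x ∈ V.1 ∧ ‖x‖ = 1},
      ‖Matrix.toEuclideanLin B x.1‖

/-- Norm of the component of `x` orthogonal to the span of the columns `M ℓ'`, `ℓ' ≠ ℓ`. -/
noncomputable def projNullNorm {d k : ℕ} (M : Matrix (Fin d) (Fin k) ℝ) (ℓ : Fin k)
    (x : EuclideanSpace ℝ (Fin d)) : ℝ :=
  ‖(Submodule.orthogonalProjectionOnto ((Submodule.span ℝ {y | ∃ ℓ' : Fin k, ℓ' ≠ ℓ ∧ y = col M ℓ'})ᗮ) x :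
      EuclideanSpace ℝ (Fin d))‖

open Finset Function

lemma singularValue_nonneg {d n : ℕ} (B : Matrix (Fin d) (Fin n) ℝ) (t : ℕ) :
    0 ≤ singularValue B t :=
  Real.iSup_nonneg fun _ => Real.iInf_nonneg fun _ => norm_nonneg _

lemma Submodule.exists_norm_eq_one_of_finrank_pos {E : Type*} [NormedAddCommGroup E]
    [NormedSpace ℝ E] [FiniteDimensional ℝ E] {V : Submodule ℝ E} (hV : 0 < Module.finrank ℝ V) :
    ∃ x ∈ V, ‖x‖ = 1 := by
  obtain ⟨v, hvV, hv0⟩ := V.exists_mem_ne_zero_of_ne_bot (Submodule.finrank_eq_zero.not.mp hV.ne')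
  exact ⟨(‖v‖⁻¹ : ℝ) • v, V.smul_mem _ hvV, norm_smul_inv_norm hv0⟩

lemma le_singularValue_of_finrank_eq {d n t : ℕ} (B : Matrix (Fin d) (Fin n) ℝ)
    (V : Submodule ℝ (EuclideanSpace ℝ (Fin n))) (hV : Module.finrank ℝ V = t) (ht : 0 < t)
    {a : ℝ} (h : ∀ x ∈ V, ‖x‖ = 1 → a ≤ ‖Matrix.toEuclideanLin B x‖) :
    a ≤ singularValue B t := by
  have hbdd : BddAbove (Set.range fun W : {W : Submodule ℝ (EuclideanSpace ℝ (Fin n)) //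
      Module.finrank ℝ W = t} =>
      ⨅ x : {x : EuclideanSpace ℝ (Fin n) // x ∈ W.1 ∧ ‖x‖ = 1},
        ‖Matrix.toEuclideanLin B x.1‖) := by
    refine ⟨specNorm B, ?_⟩
    rintro _ ⟨W, rfl⟩
    obtain ⟨v, hvW, hv1⟩ := Submodule.exists_norm_eq_one_of_finrank_pos (W.2 ▸ ht)
    refine ciInf_le_of_le ⟨0, ?_⟩ ⟨v, hvW, hv1⟩ ?_
    · rintro _ ⟨y, rfl⟩
      exact norm_nonneg _
    · have := (LinearMap.toContinuousLinearMap (Matrix.toEuclideanLin B)).le_opNorm v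
      rwa [hv1, mul_one] at this
  obtain ⟨v, hvV, hv1⟩ := Submodule.exists_norm_eq_one_of_finrank_pos (hV ▸ ht)
  have : Nonempty {x : EuclideanSpace ℝ (Fin n) // x ∈ V ∧ ‖x‖ = 1} := ⟨⟨v, hvV, hv1⟩⟩
  exact le_ciSup_of_le hbdd ⟨V, hV⟩ (le_ciInf fun x => h x.1 x.2.1 x.2.2)

lemma le_singularValue_of_orthonormal {d n t : ℕ} (B : Matrix (Fin d) (Fin n) ℝ)
    {u : Fin t → EuclideanSpace ℝ (Fin n)} (hu : Orthonormal ℝ u) (ht : 0 < t) {a : ℝ}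
    (h : ∀ c : Fin t → ℝ, ∑ i, c i ^ 2 = 1 → a ≤ ‖Matrix.toEuclideanLin B (∑ i, c i • u i)‖) :
    a ≤ singularValue B t := by
  refine le_singularValue_of_finrank_eq B (Submodule.span ℝ (Set.range u))
    (by rw [finrank_span_eq_card hu.linearIndependent, Fintype.card_fin]) ht ?_
  rintro x hx hx1
  obtain ⟨c, rfl⟩ := (Submodule.mem_span_range_iff_exists_fun ℝ).1 hx
  refine h c ?_
  have := hu.inner_sum c c univ
  rw [real_inner_self_eq_norm_sq, hx1] at this
  simpa [sq] using this.symm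

lemma exists_one_div_sqrt_card_le_abs {ι : Type*} [Fintype ι] [Nonempty ι] (c : ι → ℝ)
    (hc : ∑ i, c i ^ 2 = 1) : ∃ i, 1 / √(Fintype.card ι) ≤ |c i| := by
  obtain ⟨i, -, hi⟩ := exists_le_of_sum_le univ_nonempty
    (show ∑ _i : ι, 1 / (Fintype.card ι : ℝ) ≤ ∑ i, c i ^ 2 by
      rw [hc, sum_const, card_univ, nsmul_eq_mul, mul_one_div_cancel (by positivity)])
  refine ⟨i, ?_⟩
  rw [← Real.sqrt_sq_eq_abs, one_div, ← Real.sqrt_inv, ← one_div]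
  exact Real.sqrt_le_sqrt hi

lemma abs_le_one_of_sum_sq_eq_one {ι : Type*} [Fintype ι] {c : ι → ℝ}
    (hc : ∑ i, c i ^ 2 = 1) (i : ι) : |c i| ≤ 1 := by
  rw [← sq_le_one_iff_abs_le_one, ← hc]
  exact single_le_sum (fun j _ => sq_nonneg (c j)) (mem_univ i)

lemma norm_sum_smul_sub_card_mul_le {E F ι : Type*} [AddCommGroup E] [Module ℝ E]
    [SeminormedAddCommGroup F] [NormedSpace ℝ F] [Fintype ι] (L : E →ₗ[ℝ] F) (u : ι → E)
    (w : ι → F) {ε : ℝ} (hε : ∀ i, ‖L (u i) - w i‖ ≤ ε) {c : ι → ℝ} (hc : ∀ i, |c i| ≤ 1) :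
    ‖∑ i, c i • w i‖ - Fintype.card ι * ε ≤ ‖L (∑ i, c i • u i)‖ := by
  have hsplit : L (∑ i, c i • u i) = ∑ i, c i • w i + ∑ i, c i • (L (u i) - w i) := by
    simp only [map_sum, map_smul, smul_sub, sum_sub_distrib, add_sub_cancel]
  have herr : ‖∑ i, c i • (L (u i) - w i)‖ ≤ Fintype.card ι * ε := by
    refine (norm_sum_le _ _).trans ?_
    rw [← nsmul_eq_mul, ← card_univ, ← sum_const]
    refine sum_le_sum fun i _ => ?_
    rw [norm_smul, Real.norm_eq_abs]
    exact (mul_le_of_le_one_left (norm_nonneg _) (hc i)).trans (hε i)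
  rw [hsplit]
  linarith [norm_sub_le_norm_add (∑ i, c i • w i) (∑ i, c i • (L (u i) - w i))]

noncomputable def normalizedIndicator {ι : Type*} [Fintype ι] [DecidableEq ι] (S : Finset ι) :
    EuclideanSpace ℝ ι :=
  (√(#S : ℝ))⁻¹ • ∑ j ∈ S, EuclideanSpace.single j 1

lemma inner_sum_single_sum_single {ι : Type*} [Fintype ι] [DecidableEq ι] (S T : Finset ι) :
    inner ℝ (∑ j ∈ S, EuclideanSpace.single j (1 : ℝ)) (∑ j ∈ T, EuclideanSpace.single j 1) =
      #(S ∩ T) := by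
  simp only [sum_inner, inner_sum, EuclideanSpace.inner_single_left, map_one, one_mul,
    PiLp.single_apply, sum_boole]
  simp [filter_eq', apply_ite card, inter_comm]

lemma orthonormal_normalizedIndicator {ι κ : Type*} [Fintype ι] [DecidableEq ι] {S : κ → Finset ι}
    (hne : ∀ ℓ, (S ℓ).Nonempty) (hdisj : Pairwise (Disjoint on S)) :
    Orthonormal ℝ fun ℓ => normalizedIndicator (S ℓ) := by
  classical
  rw [orthonormal_iff_ite]
  intro ℓ ℓ'
  rw [normalizedIndicator, normalizedIndicator, real_inner_smul_left, real_inner_smul_right,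
    inner_sum_single_sum_single]
  split_ifs with h
  · subst h
    have hcard : (0 : ℝ) < #(S ℓ) := by exact_mod_cast (hne ℓ).card_pos
    rw [inter_self]
    field_simp
    rw [Real.sq_sqrt hcard.le]
  · rw [disjoint_iff_inter_eq_empty.mp (hdisj h)]
    simp

lemma toEuclideanLin_single_one {d n : ℕ} (B : Matrix (Fin d) (Fin n) ℝ) (j : Fin n) :
    Matrix.toEuclideanLin B (EuclideanSpace.single j 1) = col B j := by
  ext i
  simp [Matrix.toLpLin_apply, col]

lemma norm_toEuclideanLin_normalizedIndicator_sub_le {d n : ℕ} (B : Matrix (Fin d) (Fin n) ℝ)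
    (S : Finset (Fin n)) (v : EuclideanSpace ℝ (Fin d)) {r : ℝ}
    (h : ∀ j ∈ S, ‖col B j - v‖ ≤ r) :
    ‖Matrix.toEuclideanLin B (normalizedIndicator S) - √(#S : ℝ) • v‖ ≤ √(#S : ℝ) * r := by
  have hv : √(#S : ℝ) • v = (√(#S : ℝ))⁻¹ • ∑ _j ∈ S, v := by
    rw [sum_const, ← Nat.cast_smul_eq_nsmul ℝ, smul_smul, inv_mul_eq_div, Real.div_sqrt]
  rw [normalizedIndicator, map_smul, map_sum, hv, ← smul_sub, ← sum_sub_distrib, norm_smul,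
    norm_inv, Real.norm_of_nonneg (Real.sqrt_nonneg _)]
  calc (√(#S : ℝ))⁻¹ * ‖∑ j ∈ S, (Matrix.toEuclideanLin B (EuclideanSpace.single j 1) - v)‖
      ≤ (√(#S : ℝ))⁻¹ * (#S * r) := by
        gcongr
        refine (norm_sum_le _ _).trans ?_
        rw [← nsmul_eq_mul, ← sum_const]
        exact sum_le_sum fun j hj => toEuclideanLin_single_one B j ▸ h j hj
    _ = √(#S : ℝ) * r := by rw [← mul_assoc, inv_mul_eq_div, Real.div_sqrt]

lemma abs_mul_projNullNorm_le_norm_sum {d k : ℕ} (M : Matrix (Fin d) (Fin k) ℝ) (c : Fin k → ℝ)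
    (ℓ : Fin k) : |c ℓ| * projNullNorm M ℓ (col M ℓ) ≤ ‖∑ ℓ', c ℓ' • col M ℓ'‖ := by
  set Q := Submodule.orthogonalProjectionOnto
    (Submodule.span ℝ {y | ∃ ℓ' : Fin k, ℓ' ≠ ℓ ∧ y = col M ℓ'})ᗮ
  have hQ : Q (∑ ℓ', c ℓ' • col M ℓ') = c ℓ • Q (col M ℓ) := by
    rw [map_sum, sum_eq_single ℓ (fun ℓ' _ hne => ?_) (by simp), map_smul]
    rw [map_smul, Submodule.orthogonalProjectionOnto_apply_of_mem_orthogonal, smul_zero]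
    exact Submodule.le_orthogonal_orthogonal _ (Submodule.subset_span ⟨ℓ', hne, rfl⟩)
  calc |c ℓ| * projNullNorm M ℓ (col M ℓ)
        = ‖(Q (∑ ℓ', c ℓ' • col M ℓ') : EuclideanSpace ℝ (Fin d))‖ := by
        rw [hQ, Submodule.coe_smul, norm_smul, Real.norm_eq_abs]
        rfl
    _ ≤ ‖Q‖ * ‖∑ ℓ', c ℓ' • col M ℓ'‖ := Q.le_opNorm _
    _ ≤ ‖∑ ℓ', c ℓ' • col M ℓ'‖ :=
        mul_le_of_le_one_left (norm_nonneg _) (Submodule.orthogonalProjectionOnto_norm_le _)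

lemma projNullNorm_le_norm_sub {d k : ℕ} (M : Matrix (Fin d) (Fin k) ℝ) {ℓ ℓ' : Fin k}
    (hne : ℓ ≠ ℓ') : projNullNorm M ℓ (col M ℓ) ≤ ‖col M ℓ - col M ℓ'‖ := by
  have := abs_mul_projNullNorm_le_norm_sum M (Pi.single ℓ 1 - Pi.single ℓ' 1) ℓ
  simpa [sub_smul, sum_sub_distrib, Pi.single_apply, hne] using this

lemma disjoint_of_two_mul_lt_norm_sub {α E : Type*} [SeminormedAddCommGroup E] (f : α → E)
    {a b : E} {r : ℝ} (hab : 2 * r < ‖a - b‖) {S T : Finset α} (hS : ∀ j ∈ S, ‖f j - a‖ ≤ r)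
    (hT : ∀ j ∈ T, ‖f j - b‖ ≤ r) : Disjoint S T := by
  refine disjoint_left.mpr fun j hjS hjT => hab.not_ge ?_
  calc ‖a - b‖ ≤ ‖f j - a‖ + ‖f j - b‖ := by
        simpa only [norm_sub_rev a] using norm_sub_le_norm_sub_add_norm_sub a (f j) b
    _ ≤ 2 * r := by linarith [hS j hjS, hT j hjT]

theorem le_singularValue_of_proximate {d n k : ℕ} (hk : 0 < k) (P : Matrix (Fin d) (Fin n) ℝ)
    (M : Matrix (Fin d) (Fin k) ℝ) {β r : ℝ} (hr : 0 ≤ r)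
    (hβ : ∀ ℓ, β ≤ projNullNorm M ℓ (col M ℓ)) (hrβ : 2 * r < β) {m : ℕ} (hm : 0 < m)
    (hS : ∀ ℓ, ∃ S : Finset (Fin n), #S = m ∧ ∀ j ∈ S, ‖col P j - col M ℓ‖ ≤ r) :
    √(m : ℝ) * (β / √(k : ℝ) - k * r) ≤ singularValue P k := by
  choose S hcard hclose using hS
  have hdisj : Pairwise (Disjoint on S) := fun ℓ ℓ' hne =>
    disjoint_of_two_mul_lt_norm_sub (col P)
      (hrβ.trans_le ((hβ ℓ).trans (projNullNorm_le_norm_sub M hne))) (hclose ℓ) (hclose ℓ')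
  have hu := orthonormal_normalizedIndicator (fun ℓ => card_pos.mp (hcard ℓ ▸ hm)) hdisj
  refine le_singularValue_of_orthonormal P hu hk fun c hc => ?_
  have : Nonempty (Fin k) := ⟨⟨0, hk⟩⟩
  obtain ⟨ℓ, hℓ⟩ := exists_one_div_sqrt_card_le_abs c hc
  rw [Fintype.card_fin] at hℓ
  have hperturb := norm_sum_smul_sub_card_mul_le (Matrix.toEuclideanLin P) _
    (fun ℓ => √(m : ℝ) • col M ℓ) (fun ℓ => hcard ℓ ▸
      norm_toEuclideanLin_normalizedIndicator_sub_le P (S ℓ) (col M ℓ) (hclose ℓ))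
    (abs_le_one_of_sum_sq_eq_one hc)
  simp only [smul_comm (c _), ← smul_sum, norm_smul, Real.norm_of_nonneg (Real.sqrt_nonneg _),
    Fintype.card_fin] at hperturb
  have hβ0 : 0 ≤ β := by linarith
  calc √(m : ℝ) * (β / √(k : ℝ) - k * r)
      ≤ √(m : ℝ) * (|c ℓ| * projNullNorm M ℓ (col M ℓ)) - k * (√(m : ℝ) * r) := by
        rw [mul_sub, mul_left_comm _ (k : ℝ)]
        gcongr
        rw [← one_div_mul_eq_div]
        exact mul_le_mul hℓ (hβ ℓ) hβ0 (abs_nonneg _)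
    _ ≤ √(m : ℝ) * ‖∑ ℓ', c ℓ' • col M ℓ'‖ - k * (√(m : ℝ) * r) := by
        gcongr
        exact abs_mul_projNullNorm_le_norm_sum M c ℓ
    _ ≤ _ := hperturb

lemma eight_mul_lt_of_le_div {k α μ s : ℝ} (hk : 1 ≤ k) (hα0 : 0 < α) (hα1 : α < 1) (hs : 0 < s)
    (h : s ≤ α ^ 3 * μ / (4500 * k ^ 9)) : 8 * s < α * μ := by
  have hk9 : 1 ≤ k ^ 9 := one_le_pow₀ hk
  have hμ : 4500 * k ^ 9 * s ≤ α ^ 3 * μ := by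
    rwa [le_div_iff₀ (by positivity), mul_comm] at h
  have hα3 : α ^ 3 < α := pow_lt_self_of_lt_one₀ hα0 hα1 (by norm_num)
  have hμ0 : 0 < μ := pos_of_mul_pos_right (hμ.trans_lt' (by positivity)) (by positivity)
  nlinarith

lemma mul_rpow_div_sq_le_sub {k α μ s : ℝ} (hk : 1 ≤ k) (hα0 : 0 < α) (hα1 : α ≤ 1)
    (hs : 0 ≤ s) (h : s ≤ α ^ 3 * μ / (4500 * k ^ 9)) :
    995 * k ^ (8.5 : ℝ) * s / α ^ 2 ≤ α * μ / √k - k * (4 * s) := by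
  have hk0 : 0 < k := by linarith
  have hK : k ^ (8.5 : ℝ) * √k = k ^ 9 := by
    rw [Real.sqrt_eq_rpow, ← Real.rpow_add hk0, ← Real.rpow_natCast]
    norm_num
  have hkK : k ≤ k ^ (8.5 : ℝ) := by
    simpa using Real.rpow_le_rpow_of_exponent_le hk (show (1 : ℝ) ≤ 8.5 by norm_num)
  set K := k ^ (8.5 : ℝ)
  have hmain : 4500 * K * s / α ^ 2 ≤ α * μ / √k := by
    rw [div_le_div_iff₀ (by positivity) (by positivity)]
    calc 4500 * K * s * √k = 4500 * k ^ 9 * s := by rw [← hK]; ring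
      _ ≤ α ^ 3 * μ := by rwa [le_div_iff₀ (by positivity), mul_comm] at h
      _ = α * μ * α ^ 2 := by ring
  have herr : k * (4 * s) ≤ 4 * K * s / α ^ 2 := by
    rw [le_div_iff₀ (by positivity)]
    have : k * α ^ 2 ≤ K := (mul_le_of_le_one_right hk0.le (pow_le_one₀ hα0.le hα1)).trans hkK
    nlinarith
  have hsplit (c : ℝ) : c * K * s / α ^ 2 = c * (K * s / α ^ 2) := by ring
  rw [hsplit] at hmain herr ⊢
  linarith [show 0 ≤ K * s / α ^ 2 by positivity]

theorem stmt7_general {d n k : ℕ} (hk : 1 ≤ k)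
    (A P : Matrix (Fin d) (Fin n) ℝ) (M : Matrix (Fin d) (Fin k) ℝ)
    (σ : ℝ) (hσ : σ = specNorm (A - P) / Real.sqrt n)
    (α δ : ℝ) (hα : α ∈ Set.Ioo (0:ℝ) 1) (hδ0 : 0 < δ)
    (m : ℕ) (hm0 : 0 < m) (hm : (m : ℝ) = δ * n)
    (hWS : ∀ ℓ : Fin k, α * (⨆ ℓ' : Fin k, ‖col M ℓ'‖) ≤ projNullNorm M ℓ (col M ℓ))
    (hSB : σ / Real.sqrt δ ≤ α ^ 3 * (⨅ ℓ : Fin k, ‖col M ℓ‖) / (4500 * (k : ℝ) ^ 9))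
    (hProx : ∀ ℓ : Fin k, ∃ S : Finset (Fin n), S.card = m ∧
      ∀ j ∈ S, ‖col P j - col M ℓ‖ ≤ 4 * σ / Real.sqrt δ) :
    995 * (k : ℝ) ^ (8.5 : ℝ) * Real.sqrt n * σ / α ^ 2 ≤ singularValue P k := by
  obtain ⟨hα0, hα1⟩ := hα
  -- For `σ = 0` the sets `S ℓ` need not be disjoint (`M` may vanish), but the bound is trivial.
  rcases (hσ ▸ div_nonneg (norm_nonneg _) (Real.sqrt_nonneg _) : 0 ≤ σ).eq_or_lt with rfl | hσ0
  · simpa using singularValue_nonneg P k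
  have : Nonempty (Fin k) := ⟨⟨0, hk⟩⟩
  have hk' : (1 : ℝ) ≤ k := by exact_mod_cast hk
  have hs : 0 < σ / √δ := by positivity
  have hβ (ℓ : Fin k) : α * ⨅ ℓ, ‖col M ℓ‖ ≤ projNullNorm M ℓ (col M ℓ) :=
    (mul_le_mul_of_nonneg_left ((ciInf_le (Set.finite_range _).bddBelow ℓ).trans
      (le_ciSup (Set.finite_range _).bddAbove ℓ)) hα0.le).trans (hWS ℓ)
  have hrβ : 2 * (4 * σ / √δ) < α * ⨅ ℓ, ‖col M ℓ‖ := by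
    linarith [mul_div_assoc 4 σ √δ, eight_mul_lt_of_le_div hk' hα0 hα1 hs hSB]
  refine le_trans ?_ (le_singularValue_of_proximate hk P M (by positivity) hβ hrβ hm0 hProx)
  rw [hm, Real.sqrt_mul hδ0.le, mul_div_assoc 4]
  calc 995 * (k : ℝ) ^ (8.5 : ℝ) * √n * σ / α ^ 2
      = √δ * √n * (995 * (k : ℝ) ^ (8.5 : ℝ) * (σ / √δ) / α ^ 2) := by field_simp
    _ ≤ _ := by
        gcongr
        exact mul_rpow_div_sq_le_sub hk' hα0 hα1.le hs.le hSB

theorem stmt7 {d n k : ℕ} (hk : 1 ≤ k)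
    (A P : Matrix (Fin d) (Fin n) ℝ) (M : Matrix (Fin d) (Fin k) ℝ)
    (σ : ℝ) (hσ : σ = specNorm (A - P) / Real.sqrt n)
    (α δ : ℝ) (hα : α ∈ Set.Ioo (0:ℝ) 1) (hδ0 : 0 < δ) (hδk : δ ≤ 1 / k)
    (m : ℕ) (hm0 : 0 < m) (hm : (m : ℝ) = δ * n)
    (hWS : ∀ ℓ : Fin k, α * (⨆ ℓ' : Fin k, ‖col M ℓ'‖) ≤ projNullNorm M ℓ (col M ℓ))
    (hSB : σ / Real.sqrt δ ≤ α ^ 3 * (⨅ ℓ : Fin k, ‖col M ℓ‖) / (4500 * (k : ℝ) ^ 9))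
    (hProx : ∀ ℓ : Fin k, ∃ S : Finset (Fin n), S.card = m ∧
      ∀ j ∈ S, ‖col P j - col M ℓ‖ ≤ 4 * σ / Real.sqrt δ) :
    995 * (k : ℝ) ^ (8.5 : ℝ) * Real.sqrt n * σ / α ^ 2 ≤ singularValue P k :=
  stmt7_general hk A P M σ hσ α δ hα hδ0 m hm0 hm hWS hSB hProx
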